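/- arXiv:1709.08792 — 2 statements merged into one kernel-verified Lean document; each statement's English description precedes it below -/
import Mathlib

section
/- Let V be a scanning function that is g-filling for a function g : ℕ → ℕ with g(n) ≥ n for all n, and let B be a martingale. Define D(w) = 2^(|w|−g(|w|)) · Σ_{α : |α| = g(|w|) and α ∼_V w} B(α) for every bit string w. Then D is a martingale, i.e., D(w) > 0 and D(w0) + D(w1) = 2·D(w) for every string w. -/
open Filter

/-- The finite bit string consisting of the first `n` bits of the sequence `Z`. -/
def seqTake (Z : ℕ → Bool) (n : ℕ) : List Bool :=
  List.ofFn fun i : Fin n => Z i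

/-- A martingale is a positive rational-valued function on bit strings
satisfying the fairness condition `M x = (M x0 + M x1)/2`. -/
def IsMartingale (M : List Bool → ℚ) : Prop :=
  ∀ x : List Bool, 0 < M x ∧ M x = (M (x ++ [false]) + M (x ++ [true])) / 2

/-- `M` succeeds on `Z` if `limsup_n M (Z↾n) = ∞`. -/
def Succeeds (M : List Bool → ℚ) (Z : ℕ → Bool) : Prop :=
  ∀ c : ℚ, ∃ᶠ n in atTop, c < M (seqTake Z n)

/-- `Z` is computably random if no computable martingale succeeds on it. -/
def ComputablyRandom (Z : ℕ → Bool) : Prop :=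
  ∀ M : List Bool → ℚ, Computable M → IsMartingale M → ¬ Succeeds M Z

/-- A scanning function: the next query is never a repetition of an earlier query. -/
def IsScanning (V : List Bool → ℕ) : Prop :=
  ∀ α : List Bool, ∀ i < α.length, V α ≠ V (α.take i)

/-- `V` is `g`-filling: along any run of length `g n`, every position `r < n` is queried. -/
def IsFilling (V : List Bool → ℕ) (g : ℕ → ℕ) : Prop :=
  ∀ n : ℕ, ∀ α : List Bool, α.length = g n → ∀ r < n, ∃ i < g n, V (α.take i) = r

/-- The first `i` bits of the sequence `Z ∘ V`. -/
def scanList (Z : ℕ → Bool) (V : List Bool → ℕ) : ℕ → List Bool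
  | 0 => []
  | n + 1 => scanList Z V n ++ [Z (V (scanList Z V n))]

/-- The sequence `Y = Z ∘ V`, defined recursively by `Y i = Z (V (Y↾i))`. -/
def scanSeq (Z : ℕ → Bool) (V : List Bool → ℕ) (i : ℕ) : Bool :=
  Z (V (scanList Z V i))

/-- `α ∼_V w`: the run `α` is consistent with the string `w`, i.e. every query made
along `α` that falls inside `w` is answered according to `w`. -/
def ConsistentWith (V : List Bool → ℕ) (α w : List Bool) : Prop :=
  ∀ j < α.length, V (α.take j) < w.length → w.getD (V (α.take j)) false = α.getD j false

open scoped Classical in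
/-- The average `2^(|w|-t) · Σ_{|α| = t, α ∼_V w} B(α)`, where strings of length `t`
are given as functions `Fin t → Bool`. -/
noncomputable def scanAvg (V : List Bool → ℕ) (B : List Bool → ℚ)
    (t : ℕ) (w : List Bool) : ℚ :=
  (2 : ℚ) ^ ((w.length : ℤ) - (t : ℤ)) *
    ∑ f : Fin t → Bool,
      if ConsistentWith V (List.ofFn f) w then B (List.ofFn f) else 0

section Aux
variable {V : List Bool → ℕ} {g : ℕ → ℕ} {B : List Bool → ℚ}

lemma aux_queried (hfill : IsFilling V g) {n t : ℕ} (ht : g n ≤ t)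
    {α : List Bool} (hα : α.length = t) {r : ℕ} (hr : r < n) :
    ∃ i < t, V (α.take i) = r := by
  obtain ⟨i, hi, hVi⟩ := hfill n (α.take (g n)) (by simp [hα]; omega) r hr
  refine ⟨i, hi.trans_le ht, ?_⟩
  rwa [List.take_take, min_eq_left hi.le] at hVi

lemma aux_high (hV : IsScanning V) (hfill : IsFilling V g) {n t : ℕ} (ht : g n ≤ t)
    {α : List Bool} (hα : α.length = t) : n ≤ V α := by
  by_contra h
  push_neg at h
  obtain ⟨i, hi, hVi⟩ := aux_queried hfill ht hα h
  exact hV α i (by omega) (by rw [hVi])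

lemma query_unique (hV : IsScanning V) {α : List Bool} {i j : ℕ}
    (hi : i < α.length) (hj : j < α.length) (h : V (α.take i) = V (α.take j)) : i = j := by
  rcases lt_trichotomy i j with h' | h' | h'
  · exact absurd (by rw [List.take_take, min_eq_left h'.le]; exact h.symm)
      (hV (α.take j) i (by simp; omega))
  · exact h'
  · exact absurd (by rw [List.take_take, min_eq_left h'.le]; exact h)
      (hV (α.take i) j (by simp; omega))

lemma consistent_snoc {β w : List Bool} {b : Bool} :
    ConsistentWith V (β ++ [b]) w ↔
      ConsistentWith V β w ∧ (V β < w.length → w.getD (V β) false = b) := by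
  constructor
  · intro h
    constructor
    · intro j hj hVj
      have := h j (by simp; omega)
        (by rwa [List.take_append_of_le_length hj.le])
      rwa [List.take_append_of_le_length hj.le, List.getD_append _ _ _ _ hj] at this
    · intro hlt
      have := h β.length (by simp) (by rwa [List.take_left])
      rwa [List.take_left, List.getD_append_right _ _ _ _ le_rfl, Nat.sub_self,
        List.getD_cons_zero] at this
  · rintro ⟨h1, h2⟩ j hj hVj
    simp only [List.length_append, List.length_singleton] at hj
    rcases lt_or_eq_of_le (Nat.lt_succ_iff.mp hj) with hj' | hj'
    · rw [List.take_append_of_le_length hj'.le] at hVj ⊢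
      rw [List.getD_append _ _ _ _ hj']
      exact h1 j hj' hVj
    · subst hj'
      rw [List.take_left] at hVj ⊢
      rw [List.getD_append_right _ _ _ _ le_rfl, Nat.sub_self, List.getD_cons_zero]
      exact h2 hVj

lemma consistent_append_iff (hV : IsScanning V) {α w : List Bool} {b : Bool}
    {j : ℕ} (hj : j < α.length) (hVj : V (α.take j) = w.length) :
    ConsistentWith V α (w ++ [b]) ↔ ConsistentWith V α w ∧ α.getD j false = b := by
  constructor
  · intro h
    refine ⟨?_, ?_⟩
    · intro j' hj' hVj'
      have := h j' hj' (by simp; omega)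
      rwa [List.getD_append _ _ _ _ hVj'] at this
    · have := h j hj (by rw [hVj]; simp)
      rw [hVj, List.getD_append_right _ _ _ _ le_rfl, Nat.sub_self,
        List.getD_cons_zero] at this
      exact this.symm
  · rintro ⟨h1, h2⟩ j' hj' hVj'
    simp only [List.length_append, List.length_singleton] at hVj'
    rcases lt_or_eq_of_le (Nat.lt_succ_iff.mp hVj') with hlt | heq
    · rw [List.getD_append _ _ _ _ hlt]
      exact h1 j' hj' hlt
    · have hjj : j' = j := query_unique hV hj' hj (by rw [heq, hVj])
      subst hjj
      rw [heq, List.getD_append_right _ _ _ _ le_rfl, Nat.sub_self, List.getD_cons_zero]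
      exact h2.symm

lemma ofFn_snoc (q : Fin t → Bool) (b : Bool) :
    List.ofFn (Fin.snoc q b : Fin (t + 1) → Bool) = List.ofFn q ++ [b] := by
  rw [List.ofFn_succ']
  simp [List.concat_eq_append]

open scoped Classical in
lemma scanAvg_succ (hV : IsScanning V) (hfill : IsFilling V g)
    (hB : IsMartingale B) (w : List Bool) {t : ℕ} (ht : g w.length ≤ t) :
    scanAvg V B (t + 1) w = scanAvg V B t w := by
  unfold scanAvg
  have hsum : (∑ f : Fin (t+1) → Bool,
      if ConsistentWith V (List.ofFn f) w then B (List.ofFn f) else 0)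
      = ∑ p : Bool × (Fin t → Bool),
        if ConsistentWith V (List.ofFn p.2 ++ [p.1]) w then B (List.ofFn p.2 ++ [p.1]) else 0 := by
    refine (Fintype.sum_equiv (Fin.snocEquiv (fun _ => Bool)) _ _ ?_).symm
    intro p
    show _ = (if ConsistentWith V (List.ofFn (Fin.snoc p.2 p.1)) w
        then B (List.ofFn (Fin.snoc p.2 p.1)) else 0)
    rw [ofFn_snoc]
  rw [hsum, Fintype.sum_prod_type_right]
  have hinner : ∀ q : Fin t → Bool,
      (∑ b : Bool, if ConsistentWith V (List.ofFn q ++ [b]) w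
          then B (List.ofFn q ++ [b]) else 0)
      = 2 * (if ConsistentWith V (List.ofFn q) w then B (List.ofFn q) else 0) := by
    intro q
    have hhigh : w.length ≤ V (List.ofFn q) :=
      aux_high hV hfill ht (by simp)
    have hC : ∀ b : Bool, ConsistentWith V (List.ofFn q ++ [b]) w ↔
        ConsistentWith V (List.ofFn q) w := by
      intro b
      rw [consistent_snoc]
      exact and_iff_left (fun h => absurd h (not_lt.mpr hhigh))
    rw [Fintype.sum_bool, if_congr (hC true) rfl rfl, if_congr (hC false) rfl rfl]
    by_cases hc : ConsistentWith V (List.ofFn q) w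
    · rw [if_pos hc, if_pos hc, if_pos hc]
      have := (hB (List.ofFn q)).2
      linarith
    · rw [if_neg hc, if_neg hc, if_neg hc]; ring
  rw [Finset.sum_congr rfl (fun q _ => hinner q), ← Finset.mul_sum, ← mul_assoc]
  congr 1
  rw [← zpow_add_one₀ (two_ne_zero : (2:ℚ) ≠ 0)]
  congr 1
  push_cast
  ring

lemma scanAvg_add (hV : IsScanning V) (hfill : IsFilling V g)
    (hB : IsMartingale B) (w : List Bool) {t : ℕ} (ht : g w.length ≤ t) (s : ℕ) :
    scanAvg V B (t + s) w = scanAvg V B t w := by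
  induction s with
  | zero => rfl
  | succ s ih =>
      rw [show t + (s+1) = (t+s)+1 from rfl, scanAvg_succ hV hfill hB w (by omega), ih]

lemma scanAvg_const (hV : IsScanning V) (hfill : IsFilling V g)
    (hB : IsMartingale B) (w : List Bool) {t1 t2 : ℕ}
    (h1 : g w.length ≤ t1) (h2 : g w.length ≤ t2) :
    scanAvg V B t1 w = scanAvg V B t2 w := by
  have e1 := scanAvg_add hV hfill hB w le_rfl (t1 - g w.length)
  have e2 := scanAvg_add hV hfill hB w le_rfl (t2 - g w.length)
  rw [Nat.add_sub_cancel' h1] at e1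
  rw [Nat.add_sub_cancel' h2] at e2
  rw [e1, e2]

open scoped Classical in
lemma scanAvg_split (hV : IsScanning V) (hfill : IsFilling V g)
    (w : List Bool) {t : ℕ} (ht : g (w.length + 1) ≤ t) :
    scanAvg V B t (w ++ [false]) + scanAvg V B t (w ++ [true]) = 2 * scanAvg V B t w := by
  unfold scanAvg
  simp only [List.length_append, List.length_singleton]
  rw [← mul_add, ← Finset.sum_add_distrib]
  have hpow : (2:ℚ) ^ (((w.length + 1 : ℕ) : ℤ) - (t : ℤ)) =
      2 * 2 ^ ((w.length : ℤ) - (t : ℤ)) := by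
    rw [mul_comm, ← zpow_add_one₀ (two_ne_zero : (2:ℚ) ≠ 0)]
    congr 1
    push_cast
    ring
  have hS : (∑ f : Fin t → Bool,
      ((if ConsistentWith V (List.ofFn f) (w ++ [false]) then B (List.ofFn f) else 0) +
        if ConsistentWith V (List.ofFn f) (w ++ [true]) then B (List.ofFn f) else 0))
      = ∑ f : Fin t → Bool,
        if ConsistentWith V (List.ofFn f) w then B (List.ofFn f) else 0 := by
    refine Finset.sum_congr rfl fun f _ => ?_
    have hlen : (List.ofFn f).length = t := by simp
    obtain ⟨j, hj, hVj⟩ := aux_queried hfill ht hlen (Nat.lt_succ_self w.length)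
    have hiff := fun b : Bool =>
      consistent_append_iff hV (α := List.ofFn f) (by omega) hVj (b := b)
    by_cases hc : ConsistentWith V (List.ofFn f) w
    · rw [if_pos hc, if_congr (hiff false) rfl rfl, if_congr (hiff true) rfl rfl]
      cases hget : (List.ofFn f).getD j false <;> simp [hc, hget]
    · rw [if_neg hc, if_congr (hiff false) rfl rfl, if_congr (hiff true) rfl rfl]
      simp [hc]
  rw [hpow, hS]
  ring

end Aux

def extSeq (V : List Bool → ℕ) (w : List Bool) : ℕ → List Bool
  | 0 => []
  | n+1 => extSeq V w n ++ [w.getD (V (extSeq V w n)) false]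

section Aux2
variable {V : List Bool → ℕ} {B : List Bool → ℚ}

lemma extSeq_length (w : List Bool) : ∀ n, (extSeq V w n).length = n
  | 0 => rfl
  | n+1 => by simp [extSeq, extSeq_length w n]

lemma extSeq_take (w : List Bool) {k n : ℕ} (h : k ≤ n) :
    (extSeq V w n).take k = extSeq V w k := by
  induction n with
  | zero =>
      have hk : k = 0 := by omega
      subst hk; rfl
  | succ n ih =>
      rcases Nat.lt_or_ge k (n+1) with h' | h'
      · rw [show extSeq V w (n+1) = extSeq V w n ++ [w.getD (V (extSeq V w n)) false] from rfl,
          List.take_append_of_le_length (by rw [extSeq_length]; omega), ih (by omega)]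
      · have hk : k = n + 1 := by omega
        subst hk
        exact List.take_of_length_le (by rw [extSeq_length])

lemma extSeq_getD (w : List Bool) {j n : ℕ} (h : j < n) :
    (extSeq V w n).getD j false = w.getD (V (extSeq V w j)) false := by
  induction n with
  | zero => omega
  | succ n ih =>
      rcases Nat.lt_or_ge j n with h' | h'
      · rw [show extSeq V w (n+1) = extSeq V w n ++ [w.getD (V (extSeq V w n)) false] from rfl,
          List.getD_append _ _ _ _ (by rw [extSeq_length]; exact h'), ih h']
      · have hj : j = n := by omega
        subst hj
        rw [show extSeq V w (j+1) = extSeq V w j ++ [w.getD (V (extSeq V w j)) false] from rfl,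
          List.getD_append_right _ _ _ _ (by rw [extSeq_length]), extSeq_length,
          Nat.sub_self, List.getD_cons_zero]

lemma extSeq_consistent (w : List Bool) (n : ℕ) :
    ConsistentWith V (extSeq V w n) w := by
  intro j hj _
  rw [extSeq_length] at hj
  rw [extSeq_take w hj.le, extSeq_getD w hj]

open scoped Classical in
lemma scanAvg_pos (hB : IsMartingale B) (w : List Bool) (t : ℕ) :
    0 < scanAvg V B t w := by
  unfold scanAvg
  apply mul_pos (by positivity)
  apply Finset.sum_pos'
  · intro f _
    split
    · exact (hB _).1.le
    · exact le_rfl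
  · refine ⟨fun i : Fin t => (extSeq V w t).getD i false, Finset.mem_univ _, ?_⟩
    have hofn : List.ofFn (fun i : Fin t => (extSeq V w t).getD i false) = extSeq V w t := by
      refine List.ext_getElem (by simp [extSeq_length]) fun i h1 h2 => ?_
      rw [List.getElem_ofFn]
      exact List.getD_eq_getElem _ _ h2
    rw [hofn, if_pos (extSeq_consistent w t)]
    exact (hB _).1

end Aux2


/-- `D w = 2^(|w|-g(|w|)) · Σ_{|α| = g(|w|), α ∼_V w} B(α)` is again a martingale:
it is positive and satisfies `D(w0) + D(w1) = 2·D(w)`. -/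
theorem scanAvg_isMartingale (V : List Bool → ℕ) (hV : IsScanning V)
    (g : ℕ → ℕ) (hg : ∀ n, n ≤ g n) (hfill : IsFilling V g)
    (B : List Bool → ℚ) (hB : IsMartingale B)
    (D : List Bool → ℚ) (hD : ∀ w : List Bool, D w = scanAvg V B (g w.length) w) :
    ∀ w : List Bool, 0 < D w ∧ D (w ++ [false]) + D (w ++ [true]) = 2 * D w := by
  intro w
  refine ⟨?_, ?_⟩
  · rw [hD]; exact scanAvg_pos hB w _
  · rw [hD, hD, hD]
    have l0 : (w ++ [false]).length = w.length + 1 := by simp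
    have l1 : (w ++ [true]).length = w.length + 1 := by simp
    rw [l0, l1]
    have e0 : scanAvg V B (g (w.length+1)) (w ++ [false])
        = scanAvg V B (max (g w.length) (g (w.length + 1))) (w ++ [false]) :=
      scanAvg_const hV hfill hB _ (by rw [l0]) (by rw [l0]; exact le_max_right _ _)
    have e1 : scanAvg V B (g (w.length+1)) (w ++ [true])
        = scanAvg V B (max (g w.length) (g (w.length + 1))) (w ++ [true]) :=
      scanAvg_const hV hfill hB _ (by rw [l1]) (by rw [l1]; exact le_max_right _ _)
    rw [e0, e1, scanAvg_split hV hfill w (le_max_right _ _),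
      scanAvg_const hV hfill hB w (le_max_left _ _) le_rfl]
end

section
/- Let M be a martingale that does not bet at any even position, i.e., M(x0) = M(x1) for every string x of even length. Let B : ℕ → Bool be any sequence and define Z : ℕ → Bool recursively by Z(2n) = B(n) and Z(2n+1) = 1 if M((Z↾(2n+1))1) < M((Z↾(2n+1))0), and Z(2n+1) = 0 otherwise. Then M(Z↾n) ≤ M(ε) for every n, where ε is the empty string; in particular, M does not succeed on Z. -/
open Filter

/-- The martingale `M` does not bet at position `n`:
`M (x0) = M (x1)` for every string `x` of length `n`. -/
def NoBetAt (M : List Bool → ℚ) (n : ℕ) : Prop :=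
  ∀ x : List Bool, x.length = n → M (x ++ [false]) = M (x ++ [true])


/-! At even positions `M` does not bet, so its capital along `Z` stays put; at odd positions `Z`
takes the child of smaller capital, which by fairness is at most the current capital. So the
capital of `M` along `Z` is antitone, hence bounded by `M ε`. -/

lemma seqTake_zero (Z : ℕ → Bool) : seqTake Z 0 = [] := rfl

lemma seqTake_succ (Z : ℕ → Bool) (n : ℕ) :
    seqTake Z (n + 1) = seqTake Z n ++ [Z n] :=
  List.ofFn_succ_last

lemma length_seqTake (Z : ℕ → Bool) (n : ℕ) : (seqTake Z n).length = n :=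
  List.length_ofFn

namespace IsMartingale

variable {M : List Bool → ℚ}

lemma apply_append_singleton_eq_of_noBetAt (hM : IsMartingale M) {n : ℕ} (h : NoBetAt M n)
    {x : List Bool} (hx : x.length = n) (b : Bool) : M (x ++ [b]) = M x := by
  have hfair := (hM x).2
  have hflat := h x hx
  cases b <;> linarith

lemma apply_append_argmin_le (hM : IsMartingale M) (x : List Bool) :
    M (x ++ [if M (x ++ [true]) < M (x ++ [false]) then true else false]) ≤ M x := by
  have hfair := (hM x).2
  split_ifs with h
  · linarith
  · linarith [not_lt.mp h]

end IsMartingale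

lemma not_succeeds_of_le {M : List Bool → ℚ} {Z : ℕ → Bool} {c : ℚ}
    (h : ∀ n, M (seqTake Z n) ≤ c) : ¬ Succeeds M Z := fun hs =>
  let ⟨n, _, hn⟩ := (hs c).forall_exists_of_atTop 0
  (h n).not_gt hn

theorem diagonalize_odd_bets_general (M : List Bool → ℚ) (hM : IsMartingale M)
    (hnb : ∀ n : ℕ, Even n → NoBetAt M n)
    (Z : ℕ → Bool)
    (hZodd : ∀ n : ℕ, Z (2 * n + 1) =
      if M (seqTake Z (2 * n + 1) ++ [true]) < M (seqTake Z (2 * n + 1) ++ [false])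
      then true else false) :
    (∀ m : ℕ, M (seqTake Z m) ≤ M []) ∧ ¬ Succeeds M Z := by
  have step : ∀ m, M (seqTake Z (m + 1)) ≤ M (seqTake Z m) := by
    intro m
    rw [seqTake_succ]
    rcases Nat.even_or_odd' m with ⟨n, rfl | rfl⟩
    · exact (hM.apply_append_singleton_eq_of_noBetAt (hnb _ (even_two_mul n))
        (length_seqTake Z _) _).le
    · rw [hZodd n]
      exact hM.apply_append_argmin_le _
  have bounded (m : ℕ) : M (seqTake Z m) ≤ M [] :=
    seqTake_zero Z ▸ antitone_nat_of_succ_le (f := fun m => M (seqTake Z m)) step m.zero_le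
  exact ⟨bounded, not_succeeds_of_le bounded⟩

/-- If `M` bets only at odd positions, and `Z` copies an arbitrary sequence `B` at even
positions while diagonalising against `M` at odd positions, then the capital of `M`
along `Z` never exceeds `M ε`; in particular `M` does not succeed on `Z`. -/
theorem diagonalize_odd_bets (M : List Bool → ℚ) (hM : IsMartingale M)
    (hnb : ∀ n : ℕ, Even n → NoBetAt M n)
    (B : ℕ → Bool) (Z : ℕ → Bool)
    (hZeven : ∀ n : ℕ, Z (2 * n) = B n)
    (hZodd : ∀ n : ℕ, Z (2 * n + 1) =
      if M (seqTake Z (2 * n + 1) ++ [true]) < M (seqTake Z (2 * n + 1) ++ [false])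
      then true else false) :
    (∀ m : ℕ, M (seqTake Z m) ≤ M []) ∧ ¬ Succeeds M Z :=
  diagonalize_odd_bets_general M hM hnb Z hZodd
end
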